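/- arXiv:2308.04264 — 3 statements merged into one kernel-verified Lean document; each statement's English description precedes it below -/
import Mathlib

section
/- Let Σ be a finite nonempty type, P and Q probability mass functions on Σ, and θ₁, θ₂ ∈ [0, 1/5]. Suppose p, q : Σ → ℝ satisfy (1 − θ₁)·P(σ) ≤ p(σ) ≤ (1 + θ₁)·P(σ) and (1 − θ₂)·Q(σ) ≤ q(σ) ≤ (1 + θ₂)·Q(σ) for all σ ∈ Σ. Then |d_TV(P,Q) − Σ_{σ ∈ Σ} Q(σ) · 𝟙[q(σ) > p(σ)] · (1 − p(σ)/q(σ))| ≤ (θ₁ + θ₂)/(1 − θ₂). -/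
open Finset

/-- Given pmfs `P, Q` on a finite nonempty type and pointwise
multiplicative `(1 ± θᵢ)` estimates `p, q` of `P, Q` (with `θ₁, θ₂ ∈ [0,1/5]`),
the plug-in quantity `∑ Q σ · 𝟙[q σ > p σ] · (1 - p σ / q σ)` estimates the total
variation distance to within `(θ₁ + θ₂)/(1 - θ₂)`. -/
theorem tv_plugin_estimate {α : Type*} [Fintype α] [Nonempty α]
    (P Q p q : α → ℝ) (θ₁ θ₂ : ℝ)
    (hθ₁ : θ₁ ∈ Set.Icc (0 : ℝ) (1/5)) (hθ₂ : θ₂ ∈ Set.Icc (0 : ℝ) (1/5))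
    (hP0 : ∀ σ, 0 ≤ P σ) (hP1 : ∑ σ, P σ = 1)
    (hQ0 : ∀ σ, 0 ≤ Q σ) (hQ1 : ∑ σ, Q σ = 1)
    (hp : ∀ σ, (1 - θ₁) * P σ ≤ p σ ∧ p σ ≤ (1 + θ₁) * P σ)
    (hq : ∀ σ, (1 - θ₂) * Q σ ≤ q σ ∧ q σ ≤ (1 + θ₂) * Q σ) :
    |(1 / 2) * ∑ σ, |P σ - Q σ|
        - ∑ σ, Q σ * (if p σ < q σ then 1 - p σ / q σ else 0)|
      ≤ (θ₁ + θ₂) / (1 - θ₂) := by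
  obtain ⟨hθ₁0, hθ₁1⟩ := hθ₁
  obtain ⟨hθ₂0, hθ₂1⟩ := hθ₂
  have hθ₂lt : (0:ℝ) < 1 - θ₂ := by linarith
  have hp0 : ∀ σ, 0 ≤ p σ := fun σ => le_trans (by nlinarith [hP0 σ]) (hp σ).1
  -- term-wise bound
  have term : ∀ σ, |min (p σ * Q σ / q σ) (Q σ) - min (P σ) (Q σ)|
      ≤ (θ₁ + θ₂) / (1 - θ₂) * P σ := by
    intro σ
    obtain ⟨hp1, hp2⟩ := hp σ
    obtain ⟨hq1, hq2⟩ := hq σ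
    rcases eq_or_lt_of_le (hQ0 σ) with hQ | hQ
    · rw [← hQ]
      simp only [mul_zero, zero_div, min_self, min_eq_right (hP0 σ), sub_zero, abs_zero]
      exact mul_nonneg (div_nonneg (by linarith) (by linarith)) (hP0 σ)
    · have hqpos : 0 < q σ := lt_of_lt_of_le (by nlinarith) hq1
      set a := p σ * Q σ / q σ with ha
      have haq : a * q σ = p σ * Q σ := div_mul_cancel₀ _ (ne_of_gt hqpos)
      have ha0 : 0 ≤ a := div_nonneg (mul_nonneg (hp0 σ) (hQ0 σ)) hqpos.le
      have ha1 : a * (1 - θ₂) ≤ (1 + θ₁) * P σ := by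
        have h1 : a * ((1 - θ₂) * Q σ) ≤ a * q σ :=
          mul_le_mul_of_nonneg_left hq1 ha0
        have h2 : p σ * Q σ ≤ ((1 + θ₁) * P σ) * Q σ :=
          mul_le_mul_of_nonneg_right hp2 (hQ0 σ)
        have h3 : (a * (1 - θ₂)) * Q σ ≤ ((1 + θ₁) * P σ) * Q σ := by
          nlinarith
        exact le_of_mul_le_mul_right h3 hQ
      have ha2 : (1 - θ₁) * P σ ≤ a * (1 + θ₂) := by
        have h1 : a * q σ ≤ a * ((1 + θ₂) * Q σ) :=
          mul_le_mul_of_nonneg_left hq2 ha0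
        have h2 : ((1 - θ₁) * P σ) * Q σ ≤ p σ * Q σ :=
          mul_le_mul_of_nonneg_right hp1 (hQ0 σ)
        have h3 : ((1 - θ₁) * P σ) * Q σ ≤ (a * (1 + θ₂)) * Q σ := by
          nlinarith
        exact le_of_mul_le_mul_right h3 hQ
      have hlip : |min a (Q σ) - min (P σ) (Q σ)| ≤ |a - P σ| := by
        rcases le_total a (P σ) with h | h
        · rcases le_total a (Q σ) with h1 | h1
          · rw [min_eq_left h1]
            rcases le_total (P σ) (Q σ) with h2 | h2
            · rw [min_eq_left h2]
            · rw [min_eq_right h2, abs_le]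
              constructor <;>
                rw [abs_of_nonpos (by linarith)] <;> linarith
          · rw [min_eq_right h1, min_eq_right (le_trans h1 h)]
            simp [abs_nonneg]
        · rcases le_total (P σ) (Q σ) with h2 | h2
          · rw [min_eq_left h2]
            rcases le_total a (Q σ) with h1 | h1
            · rw [min_eq_left h1]
            · rw [min_eq_right h1, abs_le]
              constructor <;> rw [abs_of_nonneg (by linarith)] <;> linarith
          · rw [min_eq_right h2, min_eq_right (le_trans h2 (by linarith))]
            simp [abs_nonneg]
      refine hlip.trans ?_
      rw [div_mul_eq_mul_div]
      have hM : (θ₁ + θ₂) * P σ / (1 - θ₂) * (1 - θ₂) = (θ₁ + θ₂) * P σ :=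
        div_mul_cancel₀ _ (ne_of_gt hθ₂lt)
      have hM0 : 0 ≤ (θ₁ + θ₂) * P σ / (1 - θ₂) :=
        div_nonneg (mul_nonneg (by linarith) (hP0 σ)) hθ₂lt.le
      rw [abs_le]
      constructor
      · nlinarith [hP0 σ, mul_nonneg hθ₂0 (hP0 σ), mul_nonneg hθ₂0 hM0]
      · nlinarith [hP0 σ]
  -- rewrite the TV distance
  have sum1 : (1 / 2) * ∑ σ, |P σ - Q σ| = 1 - ∑ σ, min (P σ) (Q σ) := by
    have h : ∀ σ : α, |P σ - Q σ| = P σ + Q σ - 2 * min (P σ) (Q σ) := by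
      intro σ
      rcases le_total (P σ) (Q σ) with h | h
      · rw [min_eq_left h, abs_of_nonpos (by linarith)]; ring
      · rw [min_eq_right h, abs_of_nonneg (by linarith)]; ring
    simp_rw [h]
    rw [Finset.sum_sub_distrib, Finset.sum_add_distrib, hP1, hQ1, ← Finset.mul_sum]
    ring
  -- rewrite the plug-in quantity
  have hterm : ∀ σ, Q σ * (if p σ < q σ then 1 - p σ / q σ else 0)
      = Q σ - min (p σ * Q σ / q σ) (Q σ) := by
    intro σ
    obtain ⟨hq1, hq2⟩ := hq σ
    rcases eq_or_lt_of_le (hQ0 σ) with hQ | hQ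
    · have hq0 : (0:ℝ) ≤ q σ := le_trans (by nlinarith [hQ.symm]) hq1
      have hnl : ¬ p σ < q σ ∨ True := Or.inr trivial
      rw [← hQ]
      simp
    · have hqpos : 0 < q σ := lt_of_lt_of_le (by nlinarith) hq1
      by_cases h : p σ < q σ
      · rw [if_pos h, min_eq_left (by
          rw [div_le_iff₀ hqpos]
          nlinarith [hQ0 σ])]
        field_simp
      · rw [if_neg h, min_eq_right (by
          rw [le_div_iff₀ hqpos]
          nlinarith [hQ0 σ, not_lt.mp h])]
        ring
  have sum2 : ∑ σ, Q σ * (if p σ < q σ then 1 - p σ / q σ else 0)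
      = 1 - ∑ σ, min (p σ * Q σ / q σ) (Q σ) := by
    calc ∑ σ, Q σ * (if p σ < q σ then 1 - p σ / q σ else 0)
        = ∑ σ, (Q σ - min (p σ * Q σ / q σ) (Q σ)) :=
          Finset.sum_congr rfl fun σ _ => hterm σ
      _ = 1 - ∑ σ, min (p σ * Q σ / q σ) (Q σ) := by
          rw [Finset.sum_sub_distrib, hQ1]
  rw [sum1, sum2]
  have h3 : (1 - ∑ σ, min (P σ) (Q σ)) - (1 - ∑ σ, min (p σ * Q σ / q σ) (Q σ))
      = ∑ σ, (min (p σ * Q σ / q σ) (Q σ) - min (P σ) (Q σ)) := by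
    rw [Finset.sum_sub_distrib]; ring
  rw [h3]
  refine (Finset.abs_sum_le_sum_abs _ _).trans ?_
  calc ∑ σ, |min (p σ * Q σ / q σ) (Q σ) - min (P σ) (Q σ)|
      ≤ ∑ σ, (θ₁ + θ₂) / (1 - θ₂) * P σ := Finset.sum_le_sum fun σ _ => term σ
    _ = (θ₁ + θ₂) / (1 - θ₂) := by rw [← Finset.mul_sum, hP1, mul_one]
end

section
/- Let n and k be positive integers, let p₁, …, p_n ∈ (0,1], and let x₁, …, x_n be independent random variables with x_j distributed as NB(k, p_j). Set W = ∏_{j=1}^n (x_j / k). Then E[W] = ∏_{j=1}^n (1/p_j) and Var[W] / E[W]² ≤ (1 + 1/k)^n − 1. -/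
/-!
Since `m * C(m-1, k-1) = k * C(m, k)`, one has `m * NB(k,p)(m) = (k/p) * NB(k+1,p)(m+1)`.
Summing gives `E[x] = k/p`, and applying the identity twice gives `E[x(x+1)] = k(k+1)/p²`,
so `E[(x/k)²] = (1 + (1-p)/k) / p²`. By independence the first two moments of `W` are the
products of those of the factors, hence `Var W / (E W)² = ∏ⱼ (1 + (1-pⱼ)/k) - 1 ≤ (1 + 1/k)ⁿ - 1`.
-/

open MeasureTheory ProbabilityTheory

/-- The negative binomial pmf `NB(k,p)` on ℕ:
`C(m-1, k-1) pᵏ (1-p)^{m-k}` for `m ≥ k`, and `0` otherwise. -/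
noncomputable def nbPmf (k : ℕ) (p : ℝ) : ℕ → ℝ := fun m =>
  if k ≤ m then ((m - 1).choose (k - 1) : ℝ) * p ^ k * (1 - p) ^ (m - k) else 0

theorem hasSum_nat_add_iff_of_eq_zero {G : Type*} [AddCommGroup G] [TopologicalSpace G]
    [IsTopologicalAddGroup G] {f : ℕ → G} {k : ℕ} {c : G} (hf : ∀ i < k, f i = 0) :
    HasSum (fun n => f (n + k)) c ↔ HasSum f c := by
  rw [hasSum_nat_add_iff, Finset.sum_eq_zero fun i hi => hf i (Finset.mem_range.mp hi), add_zero]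

theorem nbPmf_of_lt {k : ℕ} {p : ℝ} {m : ℕ} (h : m < k) : nbPmf k p m = 0 := by
  simp [nbPmf, Nat.not_le.mpr h]

theorem nbPmf_succ_add_succ (k : ℕ) (p : ℝ) (m : ℕ) :
    nbPmf (k + 1) p (m + (k + 1)) = ((m + k).choose k : ℝ) * p ^ (k + 1) * (1 - p) ^ m := by
  simp [nbPmf, show m + (k + 1) - 1 = m + k by omega]

theorem hasSum_nbPmf {k : ℕ} (hk : 0 < k) {p : ℝ} (hp : p ∈ Set.Ioc 0 1) :
    HasSum (nbPmf k p) 1 := by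
  obtain ⟨k, rfl⟩ : ∃ k', k = k' + 1 := ⟨k - 1, by omega⟩
  rw [← hasSum_nat_add_iff_of_eq_zero fun i => nbPmf_of_lt (p := p)]
  have hq : ‖1 - p‖ < 1 := by
    rw [Real.norm_eq_abs, abs_lt]; constructor <;> linarith [hp.1, hp.2]
  have h := (hasSum_choose_mul_geometric_of_norm_lt_one k hq).mul_left (p ^ (k + 1))
  rw [sub_sub_cancel, mul_one_div_cancel (pow_ne_zero _ hp.1.ne')] at h
  have hterm (m : ℕ) :
      nbPmf (k + 1) p (m + (k + 1)) = p ^ (k + 1) * (((m + k).choose k : ℝ) * (1 - p) ^ m) := by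
    rw [nbPmf_succ_add_succ]
    ring
  simpa only [hterm] using h

theorem natCast_mul_nbPmf {k : ℕ} (hk : 0 < k) {p : ℝ} (hp : p ≠ 0) (m : ℕ) :
    (m : ℝ) * nbPmf k p m = k / p * nbPmf (k + 1) p (m + 1) := by
  rcases lt_or_ge m k with hmk | hkm
  · rw [nbPmf_of_lt hmk, nbPmf_of_lt (by omega)]
    ring
  obtain ⟨k, rfl⟩ : ∃ k', k = k' + 1 := ⟨k - 1, by omega⟩
  obtain ⟨d, rfl⟩ : ∃ d, m = d + (k + 1) := ⟨m - (k + 1), by omega⟩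
  rw [show d + (k + 1) + 1 = d + (k + 1 + 1) by omega, nbPmf_succ_add_succ, nbPmf_succ_add_succ]
  have hchoose :
      ((d + k + 1 : ℕ) : ℝ) * (d + k).choose k = (d + (k + 1)).choose (k + 1) * (k + 1) := by
    rw [← add_assoc]
    exact_mod_cast Nat.add_one_mul_choose_eq (d + k) k
  field_simp
  push_cast at hchoose ⊢
  linear_combination p ^ (k + 1) * (1 - p) ^ d * p * hchoose

theorem hasSum_nbPmf_mul_natCast {k : ℕ} (hk : 0 < k) {p : ℝ} (hp : p ∈ Set.Ioc 0 1) :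
    HasSum (fun m => nbPmf k p m * m) (k / p) := by
  have h := ((hasSum_nat_add_iff_of_eq_zero (k := 1) fun i hi => nbPmf_of_lt (by omega)).mpr
    (hasSum_nbPmf (k := k + 1) (by omega) hp)).mul_left (k / p)
  rw [mul_one] at h
  simpa only [mul_comm (nbPmf k p _), natCast_mul_nbPmf hk hp.1.ne'] using h

theorem hasSum_nbPmf_mul_natCast_mul_succ {k : ℕ} (hk : 0 < k) {p : ℝ} (hp : p ∈ Set.Ioc 0 1) :
    HasSum (fun m => nbPmf k p m * (m * (m + 1))) (k * (k + 1) / p ^ 2) := by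
  have h := ((hasSum_nat_add_iff_of_eq_zero (k := 1) fun i hi => by simp [show i = 0 by omega]).mpr
    (hasSum_nbPmf_mul_natCast (k := k + 1) (by omega) hp)).mul_left (k / p)
  have hterm (m : ℕ) :
      nbPmf k p m * (m * (m + 1)) = k / p * (nbPmf (k + 1) p (m + 1) * ((m + 1 : ℕ) : ℝ)) := by
    push_cast
    linear_combination ((m : ℝ) + 1) * natCast_mul_nbPmf hk hp.1.ne' m
  rw [show (k : ℝ) * (k + 1) / p ^ 2 = k / p * (((k + 1 : ℕ) : ℝ) / p) by push_cast; ring]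
  simpa only [hterm] using h

theorem hasSum_nbPmf_mul_div {k : ℕ} (hk : 0 < k) {p : ℝ} (hp : p ∈ Set.Ioc 0 1) :
    HasSum (fun m => nbPmf k p m * ((m : ℝ) / k)) (1 / p) := by
  have hk' : (k : ℝ) ≠ 0 := by positivity
  rw [show 1 / p = k / p / k by field_simp]
  exact ((hasSum_nbPmf_mul_natCast hk hp).div_const k).congr_fun fun m => (mul_div_assoc ..).symm

theorem hasSum_nbPmf_mul_div_sq {k : ℕ} (hk : 0 < k) {p : ℝ} (hp : p ∈ Set.Ioc 0 1) :
    HasSum (fun m => nbPmf k p m * ((m : ℝ) / k) ^ 2) ((1 + (1 - p) / k) * (1 / p) ^ 2) := by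
  have hk' : (k : ℝ) ≠ 0 := by positivity
  have hp' : p ≠ 0 := hp.1.ne'
  rw [show (1 + (1 - p) / k) * (1 / p) ^ 2 = (k * (k + 1) / p ^ 2 - k / p) / k ^ 2 by
    field_simp; ring]
  refine (((hasSum_nbPmf_mul_natCast_mul_succ hk hp).sub
    (hasSum_nbPmf_mul_natCast hk hp)).div_const _).congr_fun fun m => ?_
  field_simp
  ring

section

variable {Ω X : Type*} [MeasurableSpace Ω] {μ : Measure Ω} [IsFiniteMeasure μ]
  [MeasurableSpace X] [Countable X] [MeasurableSingletonClass X]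

theorem integrable_comp_and_integral_comp_of_hasSum {x : Ω → X} (hx : Measurable x) {f : X → ℝ}
    (hf : 0 ≤ f) {c : ℝ} (h : HasSum (fun a => μ.real (x ⁻¹' {a}) * f a) c) :
    Integrable (fun ω => f (x ω)) μ ∧ ∫ ω, f (x ω) ∂μ = c := by
  have hlaw (a : X) : (μ.map x).real {a} = μ.real (x ⁻¹' {a}) :=
    map_measureReal_apply hx (measurableSet_singleton a)
  have hfm : AEStronglyMeasurable f (μ.map x) := (measurable_of_countable f).aestronglyMeasurable
  have hint : Integrable f (μ.map x) := by
    rw [← Measure.sum_smul_dirac (μ.map x)]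
    refine integrable_sum_dirac (fun a => measure_ne_top _ _) (h.summable.congr fun a => ?_)
    rw [← measureReal_def, hlaw, Real.norm_of_nonneg (hf a)]
  refine ⟨(integrable_map_measure hfm hx.aemeasurable).mp hint, ?_⟩
  rw [← integral_map hx.aemeasurable hfm, integral_countable hint, ← h.tsum_eq]
  simp only [hlaw, smul_eq_mul]

end

section

variable {Ω : Type*} [MeasurableSpace Ω] {μ : Measure Ω} [IsFiniteMeasure μ]

theorem integral_div_of_nbPmf {k : ℕ} (hk : 0 < k) {p : ℝ} (hp : p ∈ Set.Ioc 0 1) {x : Ω → ℕ}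
    (hx : Measurable x) (hlaw : ∀ m, μ.real (x ⁻¹' {m}) = nbPmf k p m) :
    ∫ ω, (x ω : ℝ) / k ∂μ = 1 / p :=
  (integrable_comp_and_integral_comp_of_hasSum hx (f := fun m => (m : ℝ) / k)
    (fun m => by positivity) (by simpa only [hlaw] using hasSum_nbPmf_mul_div hk hp)).2

theorem integrable_div_sq_of_nbPmf {k : ℕ} (hk : 0 < k) {p : ℝ} (hp : p ∈ Set.Ioc 0 1)
    {x : Ω → ℕ} (hx : Measurable x) (hlaw : ∀ m, μ.real (x ⁻¹' {m}) = nbPmf k p m) :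
    Integrable (fun ω => ((x ω : ℝ) / k) ^ 2) μ :=
  (integrable_comp_and_integral_comp_of_hasSum hx (f := fun m => ((m : ℝ) / k) ^ 2)
    (fun m => by positivity) (by simpa only [hlaw] using hasSum_nbPmf_mul_div_sq hk hp)).1

theorem integral_div_sq_of_nbPmf {k : ℕ} (hk : 0 < k) {p : ℝ} (hp : p ∈ Set.Ioc 0 1)
    {x : Ω → ℕ} (hx : Measurable x) (hlaw : ∀ m, μ.real (x ⁻¹' {m}) = nbPmf k p m) :
    ∫ ω, ((x ω : ℝ) / k) ^ 2 ∂μ = (1 + (1 - p) / k) * (1 / p) ^ 2 :=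
  (integrable_comp_and_integral_comp_of_hasSum hx (f := fun m => ((m : ℝ) / k) ^ 2)
    (fun m => by positivity) (by simpa only [hlaw] using hasSum_nbPmf_mul_div_sq hk hp)).2

theorem memLp_div_of_nbPmf {k : ℕ} (hk : 0 < k) {p : ℝ} (hp : p ∈ Set.Ioc 0 1)
    {x : Ω → ℕ} (hx : Measurable x) (hlaw : ∀ m, μ.real (x ⁻¹' {m}) = nbPmf k p m) :
    MemLp (fun ω => (x ω : ℝ) / k) 2 μ :=
  (memLp_two_iff_integrable_sq ((measurable_from_nat.comp hx).div_const _).aestronglyMeasurable).mpr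
    (integrable_div_sq_of_nbPmf hk hp hx hlaw)

end

namespace ProbabilityTheory

variable {Ω ι : Type*} [MeasurableSpace Ω] {μ : Measure Ω} {Y : ι → Ω → ℝ}

theorem iIndepFun.integrable_fun_finset_prod (hY : iIndepFun Y μ)
    (hi : ∀ i, Integrable (Y i) μ) (s : Finset ι) : Integrable (fun ω => ∏ i ∈ s, Y i ω) μ := by
  have := hY.isProbabilityMeasure
  induction s using Finset.cons_induction with
  | empty => simp
  | cons j s hj ih =>
    have hindep := (hY.indepFun_finsetProd_of_notMem₀ (fun i => (hi i).aemeasurable) hj).symm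
    have h := hindep.integrable_mul (hi j) (by rwa [Finset.prod_fn])
    rw [Finset.prod_fn] at h
    simp only [Finset.prod_cons]
    exact h

theorem iIndepFun.variance_fun_prod [Fintype ι] (hY : iIndepFun Y μ) (hL2 : ∀ i, MemLp (Y i) 2 μ) :
    variance (fun ω => ∏ i, Y i ω) μ
      = ∏ i, ∫ ω, Y i ω ^ 2 ∂μ - (∏ i, ∫ ω, Y i ω ∂μ) ^ 2 := by
  have := hY.isProbabilityMeasure
  have hsq : iIndepFun (fun i ω => Y i ω ^ 2) μ := hY.comp (fun _ y => y ^ 2) fun _ => by fun_prop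
  have hprod_sq : (fun ω => ∏ i, Y i ω) ^ 2 = fun ω => ∏ i, Y i ω ^ 2 := by
    funext ω
    simp only [Pi.pow_apply, Finset.prod_pow]
  have hL2prod : MemLp (fun ω => ∏ i, Y i ω) 2 μ := by
    refine (memLp_two_iff_integrable_sq ?_).mpr ?_
    · exact Finset.aestronglyMeasurable_fun_prod _ fun i _ => (hL2 i).aestronglyMeasurable
    · simpa only [Finset.prod_pow] using
        hsq.integrable_fun_finset_prod (fun i => (hL2 i).integrable_sq) Finset.univ
  rw [variance_eq_sub hL2prod, hprod_sq,
    hsq.integral_fun_prod_eq_prod_integral fun i => (hL2 i).integrable_sq.aestronglyMeasurable,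
    hY.integral_fun_prod_eq_prod_integral fun i => (hL2 i).aestronglyMeasurable]

end ProbabilityTheory

theorem prod_one_add_sub_div_le {ι : Type*} (s : Finset ι) {p : ι → ℝ}
    (hp : ∀ i ∈ s, p i ∈ Set.Icc 0 1) {k : ℝ} (hk : 0 ≤ k) :
    ∏ i ∈ s, (1 + (1 - p i) / k) ≤ (1 + 1 / k) ^ s.card := by
  rw [← Finset.prod_const]
  refine Finset.prod_le_prod (fun i hi => ?_) fun i hi => ?_
  · have : 0 ≤ 1 - p i := sub_nonneg.mpr (hp i hi).2
    positivity
  · have := (hp i hi).1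
    gcongr
    linarith

theorem nb_product_mean_and_relative_variance_general (n k : ℕ) (hk : 0 < k)
    (p : Fin n → ℝ) (hp : ∀ j, p j ∈ Set.Ioc (0 : ℝ) 1)
    {Ω : Type*} [MeasurableSpace Ω] (μ : Measure Ω) [IsProbabilityMeasure μ]
    (x : Fin n → Ω → ℕ) (hmeas : ∀ j, Measurable (x j))
    (hindep : iIndepFun x μ)
    (hdist : ∀ j, ∀ m : ℕ, (μ (x j ⁻¹' {m})).toReal = nbPmf k (p j) m) :
    ∫ ω, ∏ j, (x j ω : ℝ) / k ∂μ = ∏ j, 1 / p j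
    ∧ variance (fun ω => ∏ j, (x j ω : ℝ) / k) μ
          / (∫ ω, ∏ j, (x j ω : ℝ) / k ∂μ) ^ 2
        ≤ (1 + 1 / (k : ℝ)) ^ n - 1 := by
  have hY : iIndepFun (fun j ω => (x j ω : ℝ) / k) μ :=
    hindep.comp (fun _ m => (m : ℝ) / k) fun _ => measurable_from_nat
  have hL2 j := memLp_div_of_nbPmf hk (hp j) (hmeas j) (hdist j)
  have hEW : ∫ ω, ∏ j, (x j ω : ℝ) / k ∂μ = ∏ j, 1 / p j := by
    rw [hY.integral_fun_prod_eq_prod_integral fun j => (hL2 j).aestronglyMeasurable]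
    exact Finset.prod_congr rfl fun j _ => integral_div_of_nbPmf hk (hp j) (hmeas j) (hdist j)
  have hEW_ne : (∏ j, 1 / p j) ^ 2 ≠ 0 :=
    pow_ne_zero _ (Finset.prod_ne_zero_iff.mpr fun j _ => one_div_ne_zero (hp j).1.ne')
  refine ⟨hEW, ?_⟩
  rw [hY.variance_fun_prod hL2, hEW]
  simp only [integral_div_sq_of_nbPmf hk (hp _) (hmeas _) (hdist _),
    integral_div_of_nbPmf hk (hp _) (hmeas _) (hdist _)]
  rw [Finset.prod_mul_distrib, Finset.prod_pow, ← sub_one_mul, mul_div_cancel_right₀ _ hEW_ne]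
  gcongr
  simpa using prod_one_add_sub_div_le Finset.univ (fun j _ => Set.Ioc_subset_Icc_self (hp j))
    (Nat.cast_nonneg (α := ℝ) k)

/-- For independent `xⱼ ∼ NB(k, pⱼ)` with `pⱼ ∈ (0,1]` and
`W = ∏ⱼ (xⱼ/k)`, one has `E[W] = ∏ⱼ 1/pⱼ` and
`Var[W]/E[W]² ≤ (1 + 1/k)ⁿ − 1`. -/
theorem nb_product_mean_and_relative_variance (n k : ℕ) (hn : 0 < n) (hk : 0 < k)
    (p : Fin n → ℝ) (hp : ∀ j, p j ∈ Set.Ioc (0 : ℝ) 1)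
    {Ω : Type*} [MeasurableSpace Ω] (μ : Measure Ω) [IsProbabilityMeasure μ]
    (x : Fin n → Ω → ℕ) (hmeas : ∀ j, Measurable (x j))
    (hindep : iIndepFun x μ)
    (hdist : ∀ j, ∀ m : ℕ, (μ (x j ⁻¹' {m})).toReal = nbPmf k (p j) m) :
    ∫ ω, ∏ j, (x j ω : ℝ) / k ∂μ = ∏ j, 1 / p j
    ∧ variance (fun ω => ∏ j, (x j ω : ℝ) / k) μ
          / (∫ ω, ∏ j, (x j ω : ℝ) / k ∂μ) ^ 2
        ≤ (1 + 1 / (k : ℝ)) ^ n - 1 :=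
  nb_product_mean_and_relative_variance_general n k hk p hp μ x hmeas hindep hdist
end

section
/- Let n be a positive integer and θ ∈ (0, 1/2). Let D be a probability mass function on {0,1}^n with full support (D(σ) > 0 for all σ), and let D' be a probability mass function on {0,1}^n such that for every ℓ ∈ {1, …, n}, every prefix ρ ∈ {0,1}^{ℓ−1}, and every c ∈ {0,1}: D'^ℓ_ρ(c) = (1 − 2θ)·D^ℓ_ρ(c) + θ. Then d_TV(D, D') ≤ θ·n. -/
open Finset

/-- The probability mass `D(S_{σ_{<j}})` of the set of strings agreeing with `σ`
on the first `j` coordinates. -/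
noncomputable def prefMass {n : ℕ} {A : Type*} [Fintype A] [DecidableEq A]
    (D : (Fin n → A) → ℝ) (σ : Fin n → A) (j : ℕ) : ℝ :=
  ∑ w : Fin n → A, if ∀ i : Fin n, (i : ℕ) < j → w i = σ i then D w else 0

/-- The conditional marginal `D^{j+1}_{σ_{<j+1}}(σ[j+1])` (0-indexed `j`): the
probability that the `(j+1)`-st symbol equals `σ[j+1]` conditioned on the first
`j` symbols matching `σ`.  Quantifying over all `σ` and all `j` captures all
pairs of a prefix `ρ ∈ Σ^{ℓ-1}` and a symbol `c`. -/
noncomputable def condMarg {n : ℕ} {A : Type*} [Fintype A] [DecidableEq A]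
    (D : (Fin n → A) → ℝ) (σ : Fin n → A) (j : Fin n) : ℝ :=
  prefMass D σ (j + 1) / prefMass D σ j

/-! Compare `D` and `D'` prefix by prefix.  Writing `p` for the conditional marginal of `D`,
the tamed marginal `(1 - 2θ) p + θ` differs from `p` by `θ |2p - 1| ≤ θ`, so passing from
prefixes of length `j` to length `j + 1` adds at most `θ` to the total variation distance of the
prefix distributions, while the error already present is only redistributed (the marginals of
the two continuations of a prefix sum to `1`).  Since `prefMass` is indexed by full strings `σ`,
a sum over `σ` counts each prefix of length `j` exactly `2 ^ (n - j)` times, whence the factors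
`2 ^ j` below. -/

theorem abs_mul_sub_tame_mul_le {p a b θ : ℝ} (hp0 : 0 ≤ p) (hp1 : p ≤ 1) (hθ : 0 ≤ θ)
    (hb : 0 ≤ b) : |p * a - ((1 - 2 * θ) * p + θ) * b| ≤ p * |a - b| + θ * b := by
  have hshift : |θ * (2 * p - 1) * b| ≤ θ * b := by
    have : |2 * p - 1| ≤ 1 := abs_le.2 ⟨by linarith, by linarith⟩
    rw [abs_mul, abs_mul, abs_of_nonneg hθ, abs_of_nonneg hb]
    nlinarith [mul_nonneg hθ hb]
  calc |p * a - ((1 - 2 * θ) * p + θ) * b|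
      = |p * (a - b) + θ * (2 * p - 1) * b| := by congr 1; ring
    _ ≤ |p * (a - b)| + |θ * (2 * p - 1) * b| := abs_add_le _ _
    _ ≤ p * |a - b| + θ * b := by rw [abs_mul, abs_of_nonneg hp0]; linarith

section PrefixMass

variable {n : ℕ} {A : Type*} [Fintype A] [DecidableEq A] (D : (Fin n → A) → ℝ)

theorem prefMass_zero (σ : Fin n → A) : prefMass D σ 0 = ∑ w, D w := by
  simp [prefMass]

theorem prefMass_length (σ : Fin n → A) : prefMass D σ n = D σ := by
  rw [prefMass, Finset.sum_eq_single σ]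
  · simp
  · intro w _ hw
    exact if_neg fun h => hw (funext fun i => h i i.isLt)
  · simp

theorem prefMass_congr {σ τ : Fin n → A} {j : ℕ}
    (h : ∀ i : Fin n, (i : ℕ) < j → σ i = τ i) : prefMass D σ j = prefMass D τ j := by
  refine Finset.sum_congr rfl fun w _ => if_congr ?_ rfl rfl
  exact forall_congr' fun i => imp_congr_right fun hi => by rw [h i hi]

variable {D}

theorem prefMass_nonneg (hD : ∀ w, 0 ≤ D w) (σ : Fin n → A) (j : ℕ) :
    0 ≤ prefMass D σ j :=
  Finset.sum_nonneg fun w _ => by split_ifs <;> simp [hD w]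

theorem prefMass_pos (hD : ∀ w, 0 < D w) (σ : Fin n → A) (j : ℕ) : 0 < prefMass D σ j := by
  refine Finset.sum_pos' (fun w _ => by split_ifs <;> simp [(hD w).le]) ⟨σ, mem_univ σ, ?_⟩
  simpa using hD σ

theorem prefMass_succ_le (hD : ∀ w, 0 ≤ D w) (σ : Fin n → A) (j : ℕ) :
    prefMass D σ (j + 1) ≤ prefMass D σ j := by
  refine Finset.sum_le_sum fun w _ => ?_
  by_cases h : ∀ i : Fin n, (i : ℕ) < j + 1 → w i = σ i
  · rw [if_pos h, if_pos fun i hi => h i (Nat.lt_succ_of_lt hi)]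
  · rw [if_neg h]
    split_ifs <;> simp [hD w]

theorem condMarg_nonneg (hD : ∀ w, 0 ≤ D w) (σ : Fin n → A) (j : Fin n) :
    0 ≤ condMarg D σ j :=
  div_nonneg (prefMass_nonneg hD σ _) (prefMass_nonneg hD σ _)

theorem condMarg_le_one (hD : ∀ w, 0 ≤ D w) (σ : Fin n → A) (j : Fin n) :
    condMarg D σ j ≤ 1 :=
  div_le_one_of_le₀ (prefMass_succ_le hD σ j) (prefMass_nonneg hD σ j)

/-- When `prefMass D σ j = 0` the division in `condMarg` is junk, but then the extension
`prefMass D σ (j + 1)` vanishes as well. -/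
theorem condMarg_mul_prefMass (hD : ∀ w, 0 ≤ D w) (σ : Fin n → A) (j : Fin n) :
    condMarg D σ j * prefMass D σ j = prefMass D σ (j + 1) := by
  rcases (prefMass_nonneg hD σ j).eq_or_lt with h | h
  · have := prefMass_succ_le hD σ j
    have := prefMass_nonneg hD σ (j + 1)
    rw [← h, mul_zero]
    linarith
  · exact div_mul_cancel₀ _ h.ne'

end PrefixMass

section Bool

variable {n : ℕ}

def flipAt (J : Fin n) (σ : Fin n → Bool) : Fin n → Bool :=
  Function.update σ J (!σ J)

theorem flipAt_involutive (J : Fin n) : Function.Involutive (flipAt J) := fun σ => by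
  simp [flipAt]

theorem flipAt_of_lt {J i : Fin n} (h : (i : ℕ) < J) (σ : Fin n → Bool) :
    flipAt J σ i = σ i :=
  Function.update_of_ne (Fin.ne_of_lt h) _ _

theorem sum_add_comp_flipAt (J : Fin n) (f : (Fin n → Bool) → ℝ) :
    ∑ σ, (f σ + f (flipAt J σ)) = 2 * ∑ σ, f σ := by
  rw [sum_add_distrib, two_mul]
  congr 1
  exact Equiv.sum_comp ((flipAt_involutive J).toPerm _) f

theorem prefix_succ_iff {J : Fin n} {w σ : Fin n → Bool} :
    (∀ i : Fin n, (i : ℕ) < J + 1 → w i = σ i) ↔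
      (∀ i : Fin n, (i : ℕ) < J → w i = σ i) ∧ w J = σ J := by
  refine ⟨fun h => ⟨fun i hi => h i (Nat.lt_succ_of_lt hi), h J (Nat.lt_succ_self _)⟩, ?_⟩
  rintro ⟨h, hJ⟩ i hi
  rcases Nat.lt_succ_iff_lt_or_eq.1 hi with hi | hi
  · exact h i hi
  · rwa [Fin.ext hi]

theorem prefMass_add_prefMass_flipAt (D : (Fin n → Bool) → ℝ) (J : Fin n)
    (σ : Fin n → Bool) :
    prefMass D σ (J + 1) + prefMass D (flipAt J σ) (J + 1) = prefMass D σ J := by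
  rw [prefMass, prefMass, prefMass, ← sum_add_distrib]
  refine Finset.sum_congr rfl fun w _ => ?_
  have hflip : (∀ i : Fin n, (i : ℕ) < J → w i = flipAt J σ i) ↔
      ∀ i : Fin n, (i : ℕ) < J → w i = σ i :=
    forall_congr' fun i => imp_congr_right fun hi => by rw [flipAt_of_lt hi]
  simp only [prefix_succ_iff, hflip]
  simp only [flipAt, Function.update_self]
  by_cases hP : ∀ i : Fin n, (i : ℕ) < J → w i = σ i <;> cases w J <;> cases σ J <;> simp

theorem condMarg_add_condMarg_flipAt {D : (Fin n → Bool) → ℝ} {J : Fin n}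
    {σ : Fin n → Bool} (h : prefMass D σ J ≠ 0) :
    condMarg D σ J + condMarg D (flipAt J σ) J = 1 := by
  rw [condMarg, condMarg, prefMass_congr D fun i hi => flipAt_of_lt hi σ, ← add_div,
    prefMass_add_prefMass_flipAt, div_self h]

theorem two_mul_sum_mul_of_flipAt {J : Fin n} {p g : (Fin n → Bool) → ℝ}
    (hp : ∀ σ, p σ + p (flipAt J σ) = 1) (hg : ∀ σ, g (flipAt J σ) = g σ) :
    2 * ∑ σ, p σ * g σ = ∑ σ, g σ := by
  rw [← sum_add_comp_flipAt J]
  exact Finset.sum_congr rfl fun σ _ => by rw [hg, ← add_mul, hp, one_mul]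

theorem two_pow_mul_sum_prefMass (D : (Fin n → Bool) → ℝ) {j : ℕ} (hj : j ≤ n) :
    2 ^ j * ∑ σ, prefMass D σ j = 2 ^ n * ∑ w, D w := by
  induction j with
  | zero => simp [prefMass_zero]
  | succ j ih =>
    let J : Fin n := ⟨j, hj⟩
    have hsplit : 2 * ∑ σ, prefMass D σ (J + 1) = ∑ σ, prefMass D σ J := by
      rw [← sum_add_comp_flipAt J]
      exact Finset.sum_congr rfl fun σ _ => prefMass_add_prefMass_flipAt D J σ
    rw [pow_succ, mul_assoc, hsplit, ih (Nat.le_of_succ_le hj)]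

end Bool

theorem two_pow_mul_sum_abs_prefMass_sub_le {n : ℕ} {θ : ℝ} (hθ : 0 ≤ θ)
    {D D' : (Fin n → Bool) → ℝ} (hD0 : ∀ σ, 0 < D σ) (hD1 : ∑ σ, D σ = 1)
    (hD'0 : ∀ σ, 0 ≤ D' σ) (hD'1 : ∑ σ, D' σ = 1)
    (htame : ∀ σ j, condMarg D' σ j = (1 - 2 * θ) * condMarg D σ j + θ)
    {j : ℕ} (hj : j ≤ n) :
    2 ^ j * ∑ σ, |prefMass D σ j - prefMass D' σ j| ≤ 2 * θ * j * 2 ^ n := by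
  induction j with
  | zero => simp [prefMass_zero, hD1, hD'1]
  | succ j ih =>
    let J : Fin n := ⟨j, hj⟩
    let g σ := |prefMass D σ J - prefMass D' σ J|
    have hg (σ : Fin n → Bool) : g (flipAt J σ) = g σ := by
      simp only [g, prefMass_congr D fun i hi => flipAt_of_lt hi σ,
        prefMass_congr D' fun i hi => flipAt_of_lt hi σ]
    have hstep (σ : Fin n → Bool) : |prefMass D σ (J + 1) - prefMass D' σ (J + 1)| ≤
        condMarg D σ J * g σ + θ * prefMass D' σ J := by
      rw [← condMarg_mul_prefMass (fun w => (hD0 w).le), ← condMarg_mul_prefMass hD'0, htame]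
      exact abs_mul_sub_tame_mul_le (condMarg_nonneg (fun w => (hD0 w).le) σ J)
        (condMarg_le_one (fun w => (hD0 w).le) σ J) hθ (prefMass_nonneg hD'0 σ J)
    have havg : 2 * ∑ σ, condMarg D σ J * g σ = ∑ σ, g σ :=
      two_mul_sum_mul_of_flipAt
        (fun σ => condMarg_add_condMarg_flipAt (prefMass_pos hD0 σ J).ne') hg
    have hmass : 2 ^ j * ∑ σ, prefMass D' σ J = 2 ^ n := by
      rw [two_pow_mul_sum_prefMass D' (Nat.le_of_succ_le hj), hD'1, mul_one]
    calc 2 ^ (j + 1) * ∑ σ, |prefMass D σ (J + 1) - prefMass D' σ (J + 1)|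
        ≤ 2 ^ (j + 1) * ∑ σ, (condMarg D σ J * g σ + θ * prefMass D' σ J) := by
          gcongr with σ; exact hstep σ
      _ = 2 ^ j * ∑ σ, g σ + 2 * θ * (2 ^ j * ∑ σ, prefMass D' σ J) := by
          rw [sum_add_distrib, ← mul_sum, ← havg]; ring
      _ ≤ 2 * θ * j * 2 ^ n + 2 * θ * 2 ^ n := by
          rw [hmass]; exact add_le_add_left (ih (Nat.le_of_succ_le hj)) _
      _ = 2 * θ * (j + 1 : ℕ) * 2 ^ n := by push_cast; ring

theorem tv_tamed_le_bool_general {n : ℕ} (θ : ℝ) (hθ : θ ∈ Set.Ioo (0 : ℝ) (1/2))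
    (D D' : (Fin n → Bool) → ℝ)
    (hD0 : ∀ σ, 0 < D σ) (hD1 : ∑ σ, D σ = 1)
    (hD'0 : ∀ σ, 0 ≤ D' σ) (hD'1 : ∑ σ, D' σ = 1)
    (htame : ∀ (σ : Fin n → Bool) (j : Fin n),
      condMarg D' σ j = (1 - 2 * θ) * condMarg D σ j + θ) :
    (1 / 2) * ∑ σ, |D σ - D' σ| ≤ θ * n := by
  have h := two_pow_mul_sum_abs_prefMass_sub_le hθ.1.le hD0 hD1 hD'0 hD'1 htame le_rfl
  simp only [prefMass_length] at h
  have hsum : ∑ σ, |D σ - D' σ| ≤ 2 * θ * n :=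
    le_of_mul_le_mul_left (h.trans_eq (mul_comm _ _)) (by positivity)
  linarith

/-- If `D` is a fully supported pmf on `{0,1}ⁿ`, `θ ∈ (0,1/2)`,
and `D'` is a pmf whose conditional marginals satisfy
`D'^ℓ_ρ(c) = (1-2θ)·D^ℓ_ρ(c) + θ` for every prefix `ρ` and bit `c`,
then `d_TV(D, D') ≤ θ·n`. -/
theorem tv_tamed_le_bool {n : ℕ} (hn : 0 < n) (θ : ℝ) (hθ : θ ∈ Set.Ioo (0 : ℝ) (1/2))
    (D D' : (Fin n → Bool) → ℝ)
    (hD0 : ∀ σ, 0 < D σ) (hD1 : ∑ σ, D σ = 1)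
    (hD'0 : ∀ σ, 0 ≤ D' σ) (hD'1 : ∑ σ, D' σ = 1)
    (htame : ∀ (σ : Fin n → Bool) (j : Fin n),
      condMarg D' σ j = (1 - 2 * θ) * condMarg D σ j + θ) :
    (1 / 2) * ∑ σ, |D σ - D' σ| ≤ θ * n :=
  tv_tamed_le_bool_general θ hθ D D' hD0 hD1 hD'0 hD'1 htame
end
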